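/- arXiv:0807.0262 — 5 statements merged into one kernel-verified Lean document; each statement's English description precedes it below -/
import Mathlib

section
/- For k ≥ 2, the function a ↦ E[(ξ_2²+…+ξ_k²)/((ξ_1+a)²+ξ_2²+…+ξ_k²)^{3/2}] attains its maximum over ℝ at a = 0, where ξ_1,…,ξ_k are i.i.d. standard normal. -/
/-!
Fix `ξ₂, …, ξ_k` and put `s = ξ₂² + ⋯ + ξ_k²`. The integrand is then `g_s (ξ₁ + a)` with
`g_s t = s / (t² + s)^{3/2}`, an even function of `t` that decreases in `|t|`. By the layer-cake
formula `E g_s (ξ₁ + a)` is an average of Gaussian masses of the superlevel sets of `g_s`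
translated by `-a`; these sets are symmetric intervals, and a Gaussian gives a symmetric interval
the most mass when it is not translated (Anderson's inequality on the line). Tonelli integrates
this over `ξ₂, …, ξ_k`. The right-hand side is finite since `g_s ≤ π · (Cauchy density of scale
√s)` and the standard Gaussian density is at most `1`.
-/

open MeasureTheory ProbabilityTheory Real Set
open scoped ENNReal NNReal

lemma eq_univ_or_exists_Ioo_subset_subset_Icc {S : Set ℝ}
    (hS : ∀ x ∈ S, ∀ y, |y| ≤ |x| → y ∈ S) :
    S = univ ∨ ∃ r, Ioo (-r) r ⊆ S ∧ S ⊆ Icc (-r) r := by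
  rcases S.eq_empty_or_nonempty with rfl | hne
  · exact Or.inr ⟨0, by simp, empty_subset _⟩
  by_cases hbdd : BddAbove (abs '' S)
  · refine Or.inr ⟨sSup (abs '' S), fun y hy => ?_, fun x hx => ?_⟩
    · obtain ⟨_, ⟨x, hx, rfl⟩, hyx⟩ := exists_lt_of_lt_csSup (hne.image _) (abs_lt.2 hy)
      exact hS x hx y hyx.le
    · exact abs_le.1 (le_csSup hbdd (mem_image_of_mem _ hx))
  · refine Or.inl (eq_univ_of_forall fun y => ?_)
    obtain ⟨_, ⟨x, hx, rfl⟩, hyx⟩ := not_bddAbove_iff.1 hbdd |y|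
    exact hS x hx y hyx.le

section CenteredGaussian

variable {v : ℝ≥0}

lemma gaussianPDFReal_zero_neg (x : ℝ) : gaussianPDFReal 0 v (-x) = gaussianPDFReal 0 v x := by
  simp [gaussianPDFReal]

lemma gaussianPDFReal_zero_le_of_abs_le {x y : ℝ} (h : |x| ≤ |y|) :
    gaussianPDFReal 0 v y ≤ gaussianPDFReal 0 v x := by
  have hsq : x ^ 2 ≤ y ^ 2 := sq_le_sq.2 h
  simp only [gaussianPDFReal, sub_zero]
  gcongr

/-- The mass gained on `[r, c + r]` is dominated by the mass lost on `[-r, c - r]`,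
translated by `2r`. -/
lemma intervalIntegral_gaussianPDFReal_shift_le {r : ℝ} (hr : 0 ≤ r) (c : ℝ) :
    ∫ x in (c - r)..(c + r), gaussianPDFReal 0 v x ≤ ∫ x in (-r)..r, gaussianPDFReal 0 v x := by
  set φ := gaussianPDFReal 0 v
  have hφ : ∀ p q : ℝ, IntervalIntegrable φ volume p q := fun p q =>
    (integrable_gaussianPDFReal 0 v).intervalIntegrable
  wlog hc : 0 ≤ c generalizing c
  · calc ∫ x in (c - r)..(c + r), φ x = ∫ x in (c - r)..(c + r), φ (-x) := by
          simp only [φ, gaussianPDFReal_zero_neg]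
      _ = ∫ x in (-c - r)..(-c + r), φ x := by
          rw [intervalIntegral.integral_comp_neg]; ring_nf
      _ ≤ _ := this (-c) (by linarith)
  have hloss : ∫ x in (-r)..(c - r), φ x = ∫ x in r..(c + r), φ (x - 2 * r) := by
    rw [intervalIntegral.integral_comp_sub_right]; ring_nf
  have hgain : ∫ x in r..(c + r), φ x ≤ ∫ x in r..(c + r), φ (x - 2 * r) := by
    refine intervalIntegral.integral_mono_on (by linarith) (hφ _ _) ?_ fun x hx => ?_
    · convert (hφ (-r) (c - r)).comp_sub_right (2 * r) using 1 <;> ring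
    · exact gaussianPDFReal_zero_le_of_abs_le (abs_le_abs (by linarith) (by linarith [hx.1]))
  have hadd₁ := intervalIntegral.integral_add_adjacent_intervals (hφ (c - r) r) (hφ r (c + r))
  have hadd₂ := intervalIntegral.integral_add_adjacent_intervals (hφ (-r) (c - r)) (hφ (c - r) r)
  linarith

lemma gaussianReal_Icc_le_Ioo (hv : v ≠ 0) (c r : ℝ) :
    gaussianReal 0 v (Icc (c - r) (c + r)) ≤ gaussianReal 0 v (Ioo (-r) r) := by
  rcases lt_or_ge r 0 with hr | hr
  · simp [Icc_eq_empty (by linarith : ¬c - r ≤ c + r)]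
  rw [gaussianReal_apply_eq_integral 0 hv, gaussianReal_apply_eq_integral 0 hv,
    integral_Icc_eq_integral_Ioc, ← intervalIntegral.integral_of_le (by linarith),
    ← integral_Ioc_eq_integral_Ioo, ← intervalIntegral.integral_of_le (by linarith)]
  exact ENNReal.ofReal_le_ofReal (intervalIntegral_gaussianPDFReal_shift_le hr c)

lemma gaussianReal_preimage_add_le (hv : v ≠ 0) {S : Set ℝ}
    (hS : ∀ x ∈ S, ∀ y, |y| ≤ |x| → y ∈ S) (b : ℝ) :
    gaussianReal 0 v ((· + b) ⁻¹' S) ≤ gaussianReal 0 v S := by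
  obtain rfl | ⟨r, hIoo, hIcc⟩ := eq_univ_or_exists_Ioo_subset_subset_Icc hS
  · simp
  calc gaussianReal 0 v ((· + b) ⁻¹' S) ≤ gaussianReal 0 v (Icc (-b - r) (-b + r)) := by
        refine measure_mono fun x hx => ?_
        have := hIcc hx
        simp only [mem_Icc] at this ⊢
        constructor <;> linarith
    _ ≤ gaussianReal 0 v (Ioo (-r) r) := gaussianReal_Icc_le_Ioo hv _ _
    _ ≤ gaussianReal 0 v S := measure_mono hIoo

/-- **Anderson's inequality** on the line. -/
theorem lintegral_gaussianReal_comp_add_le (hv : v ≠ 0) {g : ℝ → ℝ} (hg₀ : 0 ≤ g)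
    (hgm : Measurable g) (hg : ∀ x y, |x| ≤ |y| → g y ≤ g x) (b : ℝ) :
    ∫⁻ x, ENNReal.ofReal (g (x + b)) ∂gaussianReal 0 v
      ≤ ∫⁻ x, ENNReal.ofReal (g x) ∂gaussianReal 0 v := by
  rw [lintegral_eq_lintegral_meas_lt (f := fun x => g (x + b)) _ (ae_of_all _ fun x => hg₀ (x + b))
      (hgm.comp (measurable_add_const b)).aemeasurable,
    lintegral_eq_lintegral_meas_lt _ (ae_of_all _ hg₀) hgm.aemeasurable]
  refine lintegral_mono fun t => gaussianReal_preimage_add_le hv (S := {x | t < g x}) ?_ b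
  exact fun x hx y hyx => hx.trans_le (hg y x hyx)

end CenteredGaussian

lemma Fin.sum_univ_erase_zero {M : Type*} [AddCommMonoid M] {n : ℕ} (f : Fin (n + 1) → M) :
    ∑ i ∈ Finset.univ.erase 0, f i = ∑ j : Fin n, f j.succ := by
  rw [← Finset.compl_singleton, ← Fin.image_succ_univ,
    Finset.sum_image fun _ _ _ _ h => Fin.succ_injective _ h]

theorem lintegral_pi_fin_succ {α : Type*} [MeasurableSpace α] (μ : Measure α) [SigmaFinite μ]
    {n : ℕ} {f : (Fin (n + 1) → α) → ℝ≥0∞} (hf : Measurable f) :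
    ∫⁻ x, f x ∂Measure.pi (fun _ => μ)
      = ∫⁻ y, ∫⁻ t, f (Fin.cons t y) ∂μ ∂Measure.pi (fun _ => μ) := by
  have he := (measurePreserving_piFinSuccAbove (fun _ : Fin (n + 1) => μ) 0).symm
  rw [← he.lintegral_comp hf]
  refine (lintegral_prod_symm' _ (hf.comp he.measurable)).trans ?_
  simp only [MeasurableEquiv.piFinSuccAbove_symm_apply, Fin.insertNthEquiv_zero,
    Function.comp_apply]
  rfl

lemma rpow_three_halves_eq_mul_sqrt {u : ℝ} (hu : 0 ≤ u) : u ^ ((3 : ℝ) / 2) = u * √u := by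
  rw [sqrt_eq_rpow, ← rpow_one_add' hu (by norm_num)]
  norm_num

section Kernel

variable {s : ℝ}

lemma measurable_div_sq_add_rpow : Measurable fun t : ℝ => s / (t ^ 2 + s) ^ ((3 : ℝ) / 2) := by
  fun_prop

lemma div_sq_add_rpow_nonneg (hs : 0 ≤ s) (t : ℝ) : 0 ≤ s / (t ^ 2 + s) ^ ((3 : ℝ) / 2) := by
  positivity

lemma div_sq_add_rpow_le_of_abs_le (hs : 0 ≤ s) {x y : ℝ} (h : |x| ≤ |y|) :
    s / (y ^ 2 + s) ^ ((3 : ℝ) / 2) ≤ s / (x ^ 2 + s) ^ ((3 : ℝ) / 2) := by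
  rcases hs.eq_or_lt with rfl | hs
  · simp
  have hsq : x ^ 2 ≤ y ^ 2 := sq_le_sq.2 h
  gcongr

lemma div_sq_add_rpow_le_sqrt_div (hs : 0 ≤ s) (t : ℝ) :
    s / (t ^ 2 + s) ^ ((3 : ℝ) / 2) ≤ √s / (t ^ 2 + s) := by
  rcases hs.eq_or_lt with rfl | hs
  · simp
  have hu : 0 < t ^ 2 + s := by positivity
  have hsqrt : √s ≤ √(t ^ 2 + s) := sqrt_le_sqrt (by nlinarith)
  rw [rpow_three_halves_eq_mul_sqrt hu.le, div_le_div_iff₀ (by positivity) hu]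
  calc s * (t ^ 2 + s) = √s * ((t ^ 2 + s) * √s) := by
        linear_combination -(t ^ 2 + s) * mul_self_sqrt hs.le
    _ ≤ √s * ((t ^ 2 + s) * √(t ^ 2 + s)) := by gcongr

/-- The integrand is at most `π` times the Cauchy density of scale `√s`. -/
lemma lintegral_div_sq_add_rpow_le_pi (hs : 0 ≤ s) :
    ∫⁻ t, ENNReal.ofReal (s / (t ^ 2 + s) ^ ((3 : ℝ) / 2)) ≤ ENNReal.ofReal π := by
  rcases hs.eq_or_lt with rfl | hs
  · simp
  have hγ : NNReal.sqrt s.toNNReal ≠ 0 := by simpa using hs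
  calc ∫⁻ t, ENNReal.ofReal (s / (t ^ 2 + s) ^ ((3 : ℝ) / 2))
      ≤ ∫⁻ t, ENNReal.ofReal π * cauchyPDF 0 (NNReal.sqrt s.toNNReal) t := by
        refine lintegral_mono fun t => ?_
        rw [cauchyPDF, ← ENNReal.ofReal_mul pi_pos.le]
        refine ENNReal.ofReal_le_ofReal ((div_sq_add_rpow_le_sqrt_div hs.le t).trans_eq ?_)
        simp [cauchyPDFReal, hs.le]
        field_simp
    _ = ENNReal.ofReal π := by
        rw [lintegral_const_mul _ (measurable_cauchyPDF _ _), lintegral_cauchyPDF_eq_one _ hγ,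
          mul_one]

end Kernel

lemma gaussianReal_zero_one_le_volume : gaussianReal 0 1 ≤ volume := by
  rw [gaussianReal_of_var_ne_zero 0 one_ne_zero]
  refine (withDensity_mono (ae_of_all _ fun x => ?_)).trans_eq withDensity_one
  refine ENNReal.ofReal_le_one.2 ?_
  simp only [gaussianPDFReal, NNReal.coe_one, mul_one, sub_zero]
  have h2π : 1 ≤ √(2 * π) := one_le_sqrt.2 (by linarith [pi_gt_three])
  calc (√(2 * π))⁻¹ * rexp (-x ^ 2 / 2) ≤ 1 * 1 := by
        gcongr
        · exact inv_le_one_of_one_le₀ h2π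
        · exact exp_le_one_iff.2 (by nlinarith)
    _ = 1 := one_mul 1

lemma integral_pi_gaussianReal_eq_lintegral {n : ℕ} (b : ℝ) :
    ∫ x : Fin (n + 1) → ℝ,
        (∑ i ∈ Finset.univ.erase 0, x i ^ 2)
          / ((x 0 + b) ^ 2 + ∑ i ∈ Finset.univ.erase 0, x i ^ 2) ^ ((3 : ℝ) / 2)
        ∂(Measure.pi fun _ => gaussianReal 0 1)
      = (∫⁻ y : Fin n → ℝ, ∫⁻ t, ENNReal.ofReal
          ((∑ j, y j ^ 2) / ((t + b) ^ 2 + ∑ j, y j ^ 2) ^ ((3 : ℝ) / 2))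
          ∂gaussianReal 0 1 ∂(Measure.pi fun _ => gaussianReal 0 1)).toReal := by
  rw [integral_eq_lintegral_of_nonneg_ae (ae_of_all _ fun x => by positivity)
      (Measurable.aestronglyMeasurable (by fun_prop)),
    lintegral_pi_fin_succ _ (by fun_prop)]
  simp only [Fin.sum_univ_erase_zero, Fin.cons_zero, Fin.cons_succ]

/-- For k ≥ 2, a ↦ E[(ξ₂²+…+ξ_k²)/((ξ₁+a)²+ξ₂²+…+ξ_k²)^{3/2}]
attains its maximum over ℝ at a = 0. -/
theorem stmt_7 (k : ℕ) (hk : 2 ≤ k) (a : ℝ) :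
    (∫ x : Fin k → ℝ,
        (∑ i ∈ Finset.univ.erase (⟨0, by omega⟩ : Fin k), (x i) ^ 2)
          / ((x ⟨0, by omega⟩ + a) ^ 2
              + ∑ i ∈ Finset.univ.erase (⟨0, by omega⟩ : Fin k), (x i) ^ 2) ^ ((3 : ℝ) / 2)
        ∂(Measure.pi fun _ : Fin k => gaussianReal 0 1))
      ≤ ∫ x : Fin k → ℝ,
        (∑ i ∈ Finset.univ.erase (⟨0, by omega⟩ : Fin k), (x i) ^ 2)
          / ((x ⟨0, by omega⟩ + 0) ^ 2
              + ∑ i ∈ Finset.univ.erase (⟨0, by omega⟩ : Fin k), (x i) ^ 2) ^ ((3 : ℝ) / 2)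
        ∂(Measure.pi fun _ : Fin k => gaussianReal 0 1) := by
  obtain ⟨n, rfl⟩ : ∃ n, k = n + 1 := ⟨k - 1, by omega⟩
  simp only [Fin.zero_eta]
  rw [integral_pi_gaussianReal_eq_lintegral a, integral_pi_gaussianReal_eq_lintegral 0]
  have hs (y : Fin n → ℝ) : 0 ≤ ∑ j, y j ^ 2 := by positivity
  refine ENNReal.toReal_mono (ne_top_of_le_ne_top (ENNReal.ofReal_ne_top (r := π)) ?_) ?_
  · calc _ ≤ ∫⁻ _ : Fin n → ℝ, ENNReal.ofReal π ∂Measure.pi fun _ => gaussianReal 0 1 :=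
          lintegral_mono fun y => (lintegral_mono' gaussianReal_zero_one_le_volume le_rfl).trans
            (by simpa using lintegral_div_sq_add_rpow_le_pi (hs y))
      _ = ENNReal.ofReal π := by simp
  · exact lintegral_mono fun y => by
      simpa using lintegral_gaussianReal_comp_add_le one_ne_zero
        (fun t => div_sq_add_rpow_nonneg (hs y) t) measurable_div_sq_add_rpow
        (fun _ _ => div_sq_add_rpow_le_of_abs_le (hs y)) a
end

section
/- For every m ≥ 1, ∫_0^∞ ρ^{m-1}/(1+ρ²)^{(m+1)/2} dρ > e^{-2}/√m. -/
open MeasureTheory Real Set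

/-! For `ρ ≥ √m` we have `1 + ρ² ≤ ρ² e^{1/m}`, hence
`(1 + ρ²)^{(m+1)/2} ≤ e^{(m+1)/(2m)} ρ^{m+1} ≤ e ρ^{m+1}`, so the integrand is at least `e⁻¹ ρ⁻²`,
whose integral over `(√m, ∞)` is `e⁻¹ / √m > e⁻² / √m`. Integrability follows from the bound
`ρ^{m-1} (1 + ρ²)^{-(m+1)/2} ≤ (1 + ρ²)⁻¹`. -/

lemma sq_rpow_div_two {ρ : ℝ} (hρ : 0 ≤ ρ) (x : ℝ) : (ρ ^ 2) ^ (x / 2) = ρ ^ x := by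
  rw [← rpow_natCast_mul hρ, Nat.cast_two, mul_div_cancel₀ x two_ne_zero]

lemma one_add_rpow_le_exp_div_mul_rpow {x s : ℝ} (hx : 0 < x) (hs : 0 ≤ s) :
    (1 + x) ^ s ≤ exp (s / x) * x ^ s := by
  have h : 1 + x ≤ exp (1 / x) * x := by
    have := add_one_le_exp (1 / x)
    calc 1 + x = (1 / x + 1) * x := by field_simp
      _ ≤ exp (1 / x) * x := by gcongr
  calc (1 + x) ^ s ≤ (exp (1 / x) * x) ^ s := by gcongr
    _ = exp (s / x) * x ^ s := by
      rw [mul_rpow (exp_pos _).le hx.le, ← exp_mul, one_div_mul_eq_div]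

variable {m : ℕ}

lemma pow_div_one_add_sq_rpow_le_inv (hm : 1 ≤ m) {ρ : ℝ} (hρ : 0 ≤ ρ) :
    ρ ^ (m - 1) / (1 + ρ ^ 2) ^ (((m : ℝ) + 1) / 2) ≤ (1 + ρ ^ 2)⁻¹ := by
  have hpos : 0 < 1 + ρ ^ 2 := by positivity
  have hsplit : (1 + ρ ^ 2) ^ (((m : ℝ) + 1) / 2)
      = (1 + ρ ^ 2) ^ (((m - 1 : ℕ) : ℝ) / 2) * (1 + ρ ^ 2) := by
    rw [← rpow_add_one hpos.ne', Nat.cast_sub hm]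
    ring_nf
  have hnum : ρ ^ (m - 1) ≤ (1 + ρ ^ 2) ^ (((m - 1 : ℕ) : ℝ) / 2) := by
    rw [← rpow_natCast, ← sq_rpow_div_two hρ]
    gcongr
    linarith
  rw [hsplit, div_le_iff₀ (by positivity), inv_mul_eq_div, mul_div_cancel_right₀ _ hpos.ne']
  exact hnum

lemma integrableOn_Ioi_pow_div_one_add_sq_rpow (hm : 1 ≤ m) :
    IntegrableOn (fun ρ : ℝ => ρ ^ (m - 1) / (1 + ρ ^ 2) ^ (((m : ℝ) + 1) / 2)) (Ioi 0) := by
  refine integrable_inv_one_add_sq.integrableOn.mono'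
    (Measurable.aestronglyMeasurable (by fun_prop)) ?_
  filter_upwards [ae_restrict_mem measurableSet_Ioi] with ρ (hρ : 0 < ρ)
  rw [norm_of_nonneg (by positivity)]
  exact pow_div_one_add_sq_rpow_le_inv hm hρ.le

lemma exp_neg_one_mul_rpow_neg_two_le (hm : 1 ≤ m) {ρ : ℝ} (hρ : √m ≤ ρ) :
    exp (-1) * ρ ^ (-2 : ℝ) ≤ ρ ^ (m - 1) / (1 + ρ ^ 2) ^ (((m : ℝ) + 1) / 2) := by
  have hm' : (1 : ℝ) ≤ m := by exact_mod_cast hm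
  have hρ0 : 0 < ρ := (sqrt_pos.2 (by linarith)).trans_le hρ
  have hmρ : (m : ℝ) ≤ ρ ^ 2 := by
    simpa [sq_sqrt (by linarith : (0:ℝ) ≤ m)] using pow_le_pow_left₀ (sqrt_nonneg _) hρ 2
  have hden : (1 + ρ ^ 2) ^ (((m : ℝ) + 1) / 2) ≤ exp 1 * ρ ^ ((m : ℝ) + 1) := by
    calc (1 + ρ ^ 2) ^ (((m : ℝ) + 1) / 2)
        ≤ exp (((m : ℝ) + 1) / 2 / ρ ^ 2) * (ρ ^ 2) ^ (((m : ℝ) + 1) / 2) :=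
          one_add_rpow_le_exp_div_mul_rpow (by positivity) (by positivity)
      _ ≤ exp 1 * ρ ^ ((m : ℝ) + 1) := by
          rw [sq_rpow_div_two hρ0.le]
          gcongr
          rw [div_le_one (by positivity)]
          linarith
  rw [le_div_iff₀ (by positivity)]
  calc exp (-1) * ρ ^ (-2 : ℝ) * (1 + ρ ^ 2) ^ (((m : ℝ) + 1) / 2)
      ≤ exp (-1) * ρ ^ (-2 : ℝ) * (exp 1 * ρ ^ ((m : ℝ) + 1)) := by gcongr
    _ = ρ ^ (m - 1) := by
      rw [mul_mul_mul_comm, ← exp_add, neg_add_cancel, exp_zero, one_mul, ← rpow_add hρ0,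
        ← rpow_natCast, Nat.cast_sub hm]
      ring_nf

/-- For every m ≥ 1, ∫₀^∞ ρ^{m-1}/(1+ρ²)^{(m+1)/2} dρ > e^{-2}/√m. -/
theorem stmt_8 (m : ℕ) (hm : 1 ≤ m) :
    Real.exp (-2) / Real.sqrt m
      < ∫ ρ in Set.Ioi (0 : ℝ), ρ ^ (m - 1) / (1 + ρ ^ 2) ^ (((m : ℝ) + 1) / 2) := by
  have hsqrt : 0 < √m := sqrt_pos.2 (by exact_mod_cast hm)
  have hint := integrableOn_Ioi_pow_div_one_add_sq_rpow hm
  calc exp (-2) / √m < exp (-1) / √m := by gcongr; norm_num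
    _ = ∫ ρ in Ioi √m, exp (-1) * ρ ^ (-2 : ℝ) := by
      rw [integral_const_mul, integral_Ioi_rpow_of_lt (by norm_num) hsqrt]
      norm_num [rpow_neg_one, div_eq_mul_inv]
    _ ≤ ∫ ρ in Ioi √m, ρ ^ (m - 1) / (1 + ρ ^ 2) ^ (((m : ℝ) + 1) / 2) :=
      setIntegral_mono_on ((integrableOn_Ioi_rpow_of_lt (by norm_num) hsqrt).const_mul _)
        (hint.mono_set (Ioi_subset_Ioi hsqrt.le)) measurableSet_Ioi
        fun ρ hρ => exp_neg_one_mul_rpow_neg_two_le hm (le_of_lt hρ)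
    _ ≤ ∫ ρ in Ioi 0, ρ ^ (m - 1) / (1 + ρ ^ 2) ^ (((m : ℝ) + 1) / 2) :=
      setIntegral_mono_set hint
        (ae_restrict_of_forall_mem measurableSet_Ioi fun ρ (hρ : 0 < ρ) => by positivity)
        (Ioi_subset_Ioi hsqrt.le).eventuallyLE
end

section
/- For every m ≥ 1 and r > 0, ∫_0^r ρ^{m-1}/(1+ρ²)^{(m+1)/2} dρ ≤ (π/2)·(r²/(1+r²))^{(m-1)/2}. -/
open MeasureTheory Real

/-! For `ρ ≥ 0` the integrand factors as `(ρ² / (1 + ρ²)) ^ ((m - 1) / 2) · (1 + ρ²)⁻¹`.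
The first factor increases with `ρ`, so on `[0, r]` it is at most its value at `r`, and the
second factor integrates to `arctan r < π / 2`. -/

lemma pow_div_one_add_sq_rpow_eq {m : ℕ} (hm : 1 ≤ m) {ρ : ℝ} (hρ : 0 ≤ ρ) :
    ρ ^ (m - 1) / (1 + ρ ^ 2) ^ (((m : ℝ) + 1) / 2)
      = (ρ ^ 2 / (1 + ρ ^ 2)) ^ (((m : ℝ) - 1) / 2) * (1 + ρ ^ 2)⁻¹ := by
  have hden : 0 < 1 + ρ ^ 2 := by positivity
  have hnum : (ρ ^ 2) ^ (((m : ℝ) - 1) / 2) = ρ ^ (m - 1) := by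
    rw [← rpow_natCast ρ 2, ← rpow_mul hρ, ← rpow_natCast ρ (m - 1)]
    congr 1
    push_cast [hm]
    ring
  rw [div_rpow (sq_nonneg ρ) hden.le, hnum,
    show ((m : ℝ) + 1) / 2 = ((m : ℝ) - 1) / 2 + 1 by ring, rpow_add hden, rpow_one]
  field_simp

lemma sq_div_one_add_sq_le_sq_div_one_add_sq {ρ r : ℝ} (hρ : 0 ≤ ρ) (hρr : ρ ≤ r) :
    ρ ^ 2 / (1 + ρ ^ 2) ≤ r ^ 2 / (1 + r ^ 2) := by
  rw [div_le_div_iff₀ (by positivity) (by positivity)]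
  nlinarith [pow_le_pow_left₀ hρ hρr 2]

lemma integral_inv_one_add_sq_le_pi_div_two (r : ℝ) :
    ∫ ρ in (0 : ℝ)..r, (1 + ρ ^ 2)⁻¹ ≤ π / 2 := by
  rw [integral_inv_one_add_sq, arctan_zero, sub_zero]
  exact (arctan_lt_pi_div_two r).le

lemma continuous_pow_div_one_add_sq_rpow (n : ℕ) {s : ℝ} (hs : 0 ≤ s) :
    Continuous fun ρ : ℝ => ρ ^ n / (1 + ρ ^ 2) ^ s :=
  (continuous_pow n).div ((by fun_prop : Continuous fun ρ : ℝ => 1 + ρ ^ 2).rpow_const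
    fun _ => Or.inr hs) fun ρ => (rpow_pos_of_pos (by positivity) s).ne'

/-- For every m ≥ 1 and r > 0,
∫₀^r ρ^{m-1}/(1+ρ²)^{(m+1)/2} dρ ≤ (π/2)·(r²/(1+r²))^{(m-1)/2}. -/
theorem stmt_9 (m : ℕ) (hm : 1 ≤ m) (r : ℝ) (hr : 0 < r) :
    (∫ ρ in (0 : ℝ)..r, ρ ^ (m - 1) / (1 + ρ ^ 2) ^ (((m : ℝ) + 1) / 2))
      ≤ π / 2 * (r ^ 2 / (1 + r ^ 2)) ^ (((m : ℝ) - 1) / 2) := by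
  set C := (r ^ 2 / (1 + r ^ 2)) ^ (((m : ℝ) - 1) / 2)
  have he : 0 ≤ ((m : ℝ) - 1) / 2 :=
    div_nonneg (sub_nonneg.2 (by exact_mod_cast hm)) zero_le_two
  have hbound : ∀ ρ ∈ Set.Icc 0 r,
      ρ ^ (m - 1) / (1 + ρ ^ 2) ^ (((m : ℝ) + 1) / 2) ≤ C * (1 + ρ ^ 2)⁻¹ := by
    rintro ρ ⟨hρ, hρr⟩
    rw [pow_div_one_add_sq_rpow_eq hm hρ]
    exact mul_le_mul_of_nonneg_right
      (rpow_le_rpow (by positivity) (sq_div_one_add_sq_le_sq_div_one_add_sq hρ hρr) he)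
      (by positivity)
  calc (∫ ρ in (0 : ℝ)..r, ρ ^ (m - 1) / (1 + ρ ^ 2) ^ (((m : ℝ) + 1) / 2))
      ≤ ∫ ρ in (0 : ℝ)..r, C * (1 + ρ ^ 2)⁻¹ :=
        intervalIntegral.integral_mono_on hr.le
          ((continuous_pow_div_one_add_sq_rpow _ (by positivity)).intervalIntegrable 0 r)
          ((by fun_prop (disch := exact fun _ => by positivity) :
            Continuous fun ρ : ℝ => C * (1 + ρ ^ 2)⁻¹).intervalIntegrable 0 r)
          hbound
    _ = C * ∫ ρ in (0 : ℝ)..r, (1 + ρ ^ 2)⁻¹ := intervalIntegral.integral_const_mul C _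
    _ ≤ C * (π / 2) :=
        mul_le_mul_of_nonneg_left (integral_inv_one_add_sq_le_pi_div_two r) (by positivity)
    _ = π / 2 * C := mul_comm _ _
end

section
/- Let P(t) = ‖t‖^d − r^d on ℝ^m with d even and r > 0, and Q(u) = (1+u)^d. Then for all t ∈ ℝ^m, ‖∇(P(t)/√(Q(‖t‖²)))‖ ≤ d(1 + r^d)/(1+‖t‖²)^{3/2}. -/
/-!
Write d = 2k. The function is g(‖t‖²) with g(u) = (u^k - r^d)/(1+u)^k, whose derivative
g'(u) = k(u^(k-1) + r^d)/(1+u)^(k+1) is nonnegative, so the gradient at t is 2g'(‖t‖²) t.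
Its norm is then bounded using u^(k-1) + r^d ≤ (1 + r^d)(1+u)^(k-1) and ‖t‖ ≤ √(1 + ‖t‖²).
-/

open Real

theorem HasDerivAt.hasGradientAt_comp_norm_sq {E : Type*} [NormedAddCommGroup E]
    [InnerProductSpace ℝ E] [CompleteSpace E] {F : ℝ → ℝ} {c : ℝ} {x : E}
    (hF : HasDerivAt F c (‖x‖ ^ 2)) :
    HasGradientAt (fun y => F (‖y‖ ^ 2)) ((2 * c) • x) x := by
  refine (hF.comp_hasFDerivAt x (hasStrictFDerivAt_norm_sq x).hasFDerivAt).congr_fderiv ?_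
  ext y
  simp only [smul_apply, innerSL_apply_apply, nsmul_eq_mul, Nat.cast_ofNat,
    smul_eq_mul, map_smul, InnerProductSpace.toDual_apply_apply]
  ring

theorem hasDerivAt_pow_sub_div_one_add_pow (k : ℕ) (R : ℝ) {v : ℝ} (hv : 1 + v ≠ 0) :
    HasDerivAt (fun v => (v ^ k - R) / (1 + v) ^ k)
      (k * (v ^ (k - 1) + R) / (1 + v) ^ (k + 1)) v := by
  refine (((hasDerivAt_pow k v).sub_const R).fun_div
    (((hasDerivAt_id v).const_add 1).fun_pow k) (pow_ne_zero k hv)).congr_deriv ?_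
  rcases k with _ | j
  · simp
  · simp only [id, add_tsub_cancel_right]
    field_simp
    ring

theorem pow_add_le_one_add_mul_one_add_pow {u R : ℝ} (hu : 0 ≤ u) (hR : 0 ≤ R) (n : ℕ) :
    u ^ n + R ≤ (1 + R) * (1 + u) ^ n := by
  have hun : u ^ n ≤ (1 + u) ^ n := pow_le_pow_left₀ hu (by linarith) n
  have hRn : R ≤ R * (1 + u) ^ n := le_mul_of_one_le_right hR (one_le_pow₀ (by linarith))
  linarith

theorem two_mul_mul_le_div_one_add_sq_rpow_three_halves (k : ℕ) {R x : ℝ} (hR : 0 ≤ R)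
    (hx : 0 ≤ x) :
    2 * (k * ((x ^ 2) ^ (k - 1) + R) / (1 + x ^ 2) ^ (k + 1)) * x
      ≤ 2 * k * (1 + R) / (1 + x ^ 2) ^ ((3 : ℝ) / 2) := by
  set A := 1 + x ^ 2
  have hApos : 0 < A := by positivity
  have hx_le : x ≤ √A := by simpa [abs_of_nonneg hx] using Real.abs_le_sqrt (by linarith : x ^ 2 ≤ A)
  have hA32 : A ^ ((3 : ℝ) / 2) = A * √A := by
    rw [show (3 : ℝ) / 2 = 1 + 1 / 2 by norm_num, rpow_add hApos, rpow_one, sqrt_eq_rpow]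
  rcases k with _ | j
  · simp
  calc 2 * (↑(j + 1) * ((x ^ 2) ^ j + R) / A ^ (j + 2)) * x
      ≤ 2 * (↑(j + 1) * ((1 + R) * A ^ j) / A ^ (j + 2)) * √A := by
        gcongr
        exact pow_add_le_one_add_mul_one_add_pow (by positivity) hR j
    _ = 2 * ↑(j + 1) * (1 + R) / A ^ ((3 : ℝ) / 2) := by
        rw [hA32]
        field_simp
        rw [sq_sqrt hApos.le]
        ring

theorem stmt_16_general (m d : ℕ) (hd : Even d) (r : ℝ) :
    ∀ t : EuclideanSpace ℝ (Fin m),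
      ‖gradient
          (fun s : EuclideanSpace ℝ (Fin m) =>
            (‖s‖ ^ d - r ^ d) / Real.sqrt ((1 + ‖s‖ ^ 2) ^ d)) t‖
        ≤ d * (1 + r ^ d) / (1 + ‖t‖ ^ 2) ^ ((3 : ℝ) / 2) := by
  intro t
  obtain ⟨k, rfl⟩ : ∃ k, d = 2 * k := hd.exists_two_nsmul d
  have hfun : (fun s : EuclideanSpace ℝ (Fin m) =>
      (‖s‖ ^ (2 * k) - r ^ (2 * k)) / √((1 + ‖s‖ ^ 2) ^ (2 * k)))
      = fun s => ((‖s‖ ^ 2) ^ k - r ^ (2 * k)) / (1 + ‖s‖ ^ 2) ^ k := by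
    funext s
    rw [pow_mul, pow_mul' (1 + _), sqrt_sq (by positivity)]
  have hgrad := (hasDerivAt_pow_sub_div_one_add_pow k (r ^ (2 * k))
    (by positivity : 1 + ‖t‖ ^ 2 ≠ 0)).hasGradientAt_comp_norm_sq
  have hR := (even_two_mul k).pow_nonneg r
  rw [hfun, hgrad.gradient, norm_smul, norm_of_nonneg (by positivity)]
  push_cast
  exact two_mul_mul_le_div_one_add_sq_rpow_three_halves k hR (norm_nonneg t)

/-- For P(t) = ‖t‖^d − r^d on ℝ^m with d even, r > 0, and Q(u) = (1+u)^d: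
‖∇(P/√(Q(‖t‖²)))(t)‖ ≤ d(1+r^d)/(1+‖t‖²)^{3/2} for all t. -/
theorem stmt_16 (m d : ℕ) (hd : Even d) (r : ℝ) (hr : 0 < r) :
    ∀ t : EuclideanSpace ℝ (Fin m),
      ‖gradient
          (fun s : EuclideanSpace ℝ (Fin m) =>
            (‖s‖ ^ d - r ^ d) / Real.sqrt ((1 + ‖s‖ ^ 2) ^ d)) t‖
        ≤ d * (1 + r ^ d) / (1 + ‖t‖ ^ 2) ^ ((3 : ℝ) / 2) :=
  stmt_16_general m d hd r
end

section
/- Let P be a polynomial on ℝ^m of degree d, and Q(u) = Σ_{k=0}^d c_k u^k with c_k ≥ 0, c_d > 0, Q(u) > 0 for u ≥ 0. Then H(P,Q) := sup_{t∈ℝ^m} (1+‖t‖)·‖∇(P(t)/√(Q(‖t‖²)))‖ is finite. -/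
/-!
With `q = √(Q(‖t‖²))`, the gradient of `P / q` is `∇P / q - P Q'(‖t‖²) t / q³`. Because `Q` has
nonnegative coefficients, `c_d > 0` and no zero on `[0, ∞)`, it is comparable to `(1 + u)^d`:
`Q(u) ≥ ε (1 + u)^d`, hence `q ≳ (1 + ‖t‖)^d`, and `(1 + u) Q'(u) ≲ (1 + u)^d ≲ Q(u)`. With
`|P(t)| ≲ (1 + ‖t‖)^d` and `(1 + ‖t‖) ‖∇P(t)‖ ≲ (1 + ‖t‖)^d`, both terms of `(1 + ‖t‖) ‖∇(P / q)‖`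
are then `≲ (1 + ‖t‖)^d / q`, which is bounded.
-/

open Finset

theorem exists_pos_mul_one_add_pow_le_sum {d : ℕ} {c : ℕ → ℝ} (hc : ∀ k ≤ d, 0 ≤ c k)
    (hcd : 0 < c d) (hpos : ∀ u, 0 ≤ u → 0 < ∑ k ∈ range (d + 1), c k * u ^ k) :
    ∃ ε > 0, ∀ u, 0 ≤ u → ε * (1 + u) ^ d ≤ ∑ k ∈ range (d + 1), c k * u ^ k := by
  -- On `[0, 1]` the sum is at least its minimum `μ > 0`; for `u ≥ 1` it is at least
  -- `c d * u ^ d ≥ c d * ((1 + u) / 2) ^ d`.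
  have hcont : Continuous fun u : ℝ => ∑ k ∈ range (d + 1), c k * u ^ k := by fun_prop
  obtain ⟨u₀, hu₀, hmin⟩ := isCompact_Icc.exists_isMinOn (Set.nonempty_Icc.2 zero_le_one)
    hcont.continuousOn
  set μ := ∑ k ∈ range (d + 1), c k * u₀ ^ k
  have hμ : 0 < μ := hpos u₀ hu₀.1
  refine ⟨min μ (c d) / 2 ^ d, by positivity, fun u hu => ?_⟩
  rcases le_or_gt u 1 with hu1 | hu1
  · calc min μ (c d) / 2 ^ d * (1 + u) ^ d ≤ μ / 2 ^ d * 2 ^ d :=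
          mul_le_mul (by gcongr; exact min_le_left _ _) (pow_le_pow_left₀ (by linarith)
            (by linarith) d) (by positivity) (by positivity)
      _ ≤ _ := by
          rw [div_mul_cancel₀ _ (by positivity)]
          exact hmin ⟨hu, hu1⟩
  · calc min μ (c d) / 2 ^ d * (1 + u) ^ d ≤ c d / 2 ^ d * (2 * u) ^ d :=
          mul_le_mul (by gcongr; exact min_le_right _ _) (pow_le_pow_left₀ (by linarith)
            (by linarith) d) (by positivity) (by positivity)
      _ = c d * u ^ d := by rw [mul_pow]; field_simp
      _ ≤ _ := single_le_sum (f := fun k => c k * u ^ k)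
          (fun k hk => mul_nonneg (hc k (mem_range_succ_iff.1 hk)) (by positivity))
          (self_mem_range_succ d)

theorem one_add_mul_abs_sum_deriv_le {d : ℕ} {c : ℕ → ℝ} (hc : ∀ k ≤ d, 0 ≤ c k) {u : ℝ}
    (hu : 0 ≤ u) :
    (1 + u) * |∑ k ∈ range (d + 1), c k * (k * u ^ (k - 1))| ≤
      (∑ k ∈ range (d + 1), c k * k) * (1 + u) ^ d := by
  have hc' : ∀ k ∈ range (d + 1), 0 ≤ c k := fun k hk => hc k (mem_range_succ_iff.1 hk)
  rw [abs_of_nonneg (sum_nonneg fun k hk => mul_nonneg (hc' k hk) (by positivity)), mul_sum,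
    sum_mul]
  refine sum_le_sum fun k hk => ?_
  rcases Nat.eq_zero_or_pos k with rfl | hk0
  · simp
  have hu_pow : u ^ (k - 1) * (1 + u) ≤ (1 + u) ^ d :=
    calc u ^ (k - 1) * (1 + u) ≤ (1 + u) ^ (k - 1) * (1 + u) := by gcongr; linarith
      _ = (1 + u) ^ k := by rw [← pow_succ, Nat.sub_add_cancel hk0]
      _ ≤ (1 + u) ^ d := pow_le_pow_right₀ (by linarith) (mem_range_succ_iff.1 hk)
  calc (1 + u) * (c k * (k * u ^ (k - 1))) = c k * k * (u ^ (k - 1) * (1 + u)) := by ring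
    _ ≤ c k * k * (1 + u) ^ d :=
        mul_le_mul_of_nonneg_left hu_pow (mul_nonneg (hc' k hk) k.cast_nonneg)

theorem hasDerivAt_sum_mul_pow (s : Finset ℕ) (c : ℕ → ℝ) (u : ℝ) :
    HasDerivAt (fun u => ∑ k ∈ s, c k * u ^ k) (∑ k ∈ s, c k * (k * u ^ (k - 1))) u :=
  HasDerivAt.fun_sum fun k _ => (hasDerivAt_pow k u).const_mul (c k)

theorem exists_one_add_mul_abs_sum_deriv_le {d : ℕ} {c : ℕ → ℝ} {ε : ℝ} (hc : ∀ k ≤ d, 0 ≤ c k)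
    (hε : 0 < ε) (hlow : ∀ u, 0 ≤ u → ε * (1 + u) ^ d ≤ ∑ k ∈ range (d + 1), c k * u ^ k) :
    ∃ K, 0 ≤ K ∧ ∀ u, 0 ≤ u → (1 + u) * |∑ k ∈ range (d + 1), c k * (k * u ^ (k - 1))| ≤
      K * ∑ k ∈ range (d + 1), c k * u ^ k := by
  set B := ∑ k ∈ range (d + 1), c k * k
  have hB : 0 ≤ B :=
    sum_nonneg fun k hk => mul_nonneg (hc k (mem_range_succ_iff.1 hk)) k.cast_nonneg
  refine ⟨B / ε, by positivity, fun u hu => (one_add_mul_abs_sum_deriv_le hc hu).trans ?_⟩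
  calc B * (1 + u) ^ d = B / ε * (ε * (1 + u) ^ d) := by field_simp
    _ ≤ _ := by gcongr; exact hlow u hu

theorem EuclideanSpace.abs_apply_le_one_add_norm {ι : Type*} [Fintype ι]
    (x : EuclideanSpace ℝ ι) (i : ι) : |x i| ≤ 1 + ‖x‖ :=
  (PiLp.norm_apply_le x i).trans (le_add_of_nonneg_left zero_le_one)

namespace MvPolynomial

variable {σ : Type*}

theorem abs_eval_le_of_abs_le (P : MvPolynomial σ ℝ) {x : σ → ℝ} {r : ℝ} (hr : 1 ≤ r)
    (hx : ∀ i, |x i| ≤ r) :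
    |eval x P| ≤ (∑ s ∈ P.support, |coeff s P|) * r ^ P.totalDegree := by
  rw [eval_eq, sum_mul]
  refine (abs_sum_le_sum_abs _ _).trans (sum_le_sum fun s hs => ?_)
  rw [abs_mul, abs_prod]
  gcongr
  calc ∏ i ∈ s.support, |x i ^ s i| ≤ ∏ i ∈ s.support, r ^ s i :=
        prod_le_prod (fun _ _ => abs_nonneg _) fun i _ => by
          rw [abs_pow]; exact pow_le_pow_left₀ (abs_nonneg _) (hx i) _
    _ = r ^ s.sum fun _ e => e := prod_pow_eq_pow_sum _ _ _
    _ ≤ r ^ P.totalDegree := pow_le_pow_right₀ hr (le_totalDegree hs)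

theorem totalDegree_pderiv_le {R : Type*} [CommSemiring R] (P : MvPolynomial σ R) (i : σ) :
    (pderiv i P).totalDegree ≤ P.totalDegree - 1 := by
  refine Finset.sup_le fun s hs => ?_
  rw [mem_support_iff, coeff_pderiv] at hs
  have hdeg := le_totalDegree (mem_support_iff.2 (left_ne_zero_of_mul hs))
  rw [Finsupp.sum_add_index' (fun _ => rfl) (fun _ _ _ => rfl), Finsupp.sum_single_index rfl]
    at hdeg
  omega

theorem mul_abs_eval_pderiv_le_of_abs_le (P : MvPolynomial σ ℝ) (i : σ) {x : σ → ℝ} {r : ℝ}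
    (hr : 1 ≤ r) (hx : ∀ i, |x i| ≤ r) :
    r * |eval x (pderiv i P)| ≤
      (∑ s ∈ (pderiv i P).support, |coeff s (pderiv i P)|) * r ^ P.totalDegree := by
  rcases Nat.eq_zero_or_pos P.totalDegree with h | h
  · rw [totalDegree_eq_zero_iff_eq_C.1 h]
    simp
  calc r * |eval x (pderiv i P)|
      ≤ r * ((∑ s ∈ (pderiv i P).support, |coeff s (pderiv i P)|) * r ^ (P.totalDegree - 1)) := by
        gcongr
        exact ((pderiv i P).abs_eval_le_of_abs_le hr hx).trans
          (by gcongr; exact totalDegree_pderiv_le P i)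
    _ = _ := by rw [mul_left_comm, ← pow_succ', Nat.sub_add_cancel h]

section Euclidean

variable {ι : Type*} [Fintype ι]

noncomputable def evalFDeriv (P : MvPolynomial ι ℝ) (x : EuclideanSpace ℝ ι) :
    StrongDual ℝ (EuclideanSpace ℝ ι) :=
  ∑ i, eval x.ofLp (pderiv i P) • EuclideanSpace.proj i

theorem evalFDeriv_mul (P P' : MvPolynomial ι ℝ) (x : EuclideanSpace ℝ ι) :
    evalFDeriv (P * P') x = eval x.ofLp P • evalFDeriv P' x + eval x.ofLp P' • evalFDeriv P x := by
  simp only [evalFDeriv, Derivation.leibniz, map_add, smul_eq_mul, map_mul, add_smul, mul_smul,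
    sum_add_distrib, smul_sum]

theorem evalFDeriv_X (i : ι) (x : EuclideanSpace ℝ ι) :
    evalFDeriv (X i) x = EuclideanSpace.proj i := by
  classical
  simp [evalFDeriv, pderiv_X, Pi.single_apply]

theorem hasFDerivAt_eval (P : MvPolynomial ι ℝ) (x : EuclideanSpace ℝ ι) :
    HasFDerivAt (fun y : EuclideanSpace ℝ ι => eval y.ofLp P) (evalFDeriv P x) x := by
  induction P using MvPolynomial.induction_on with
  | C a => simpa [evalFDeriv] using hasFDerivAt_const a x
  | add P P' hP hP' => simpa [evalFDeriv, sum_add_distrib, add_smul] using hP.fun_add hP'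
  | mul_X P i hP =>
    simpa [evalFDeriv_mul, evalFDeriv_X] using hP.fun_mul (EuclideanSpace.proj i).hasFDerivAt

theorem norm_evalFDeriv_le (P : MvPolynomial ι ℝ) (x : EuclideanSpace ℝ ι) :
    ‖evalFDeriv P x‖ ≤ ∑ i, |eval x.ofLp (pderiv i P)| := by
  refine (norm_sum_le _ _).trans (sum_le_sum fun i _ => ?_)
  rw [norm_smul, Real.norm_eq_abs]
  refine mul_le_of_le_one_right (abs_nonneg _) ?_
  refine ContinuousLinearMap.opNorm_le_bound _ zero_le_one fun y => ?_
  simpa using PiLp.norm_apply_le y i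

theorem exists_abs_eval_le (P : MvPolynomial ι ℝ) :
    ∃ A, ∀ x : EuclideanSpace ℝ ι, |eval x.ofLp P| ≤ A * (1 + ‖x‖) ^ P.totalDegree :=
  ⟨_, fun x => P.abs_eval_le_of_abs_le (le_add_of_nonneg_right (norm_nonneg x))
    (EuclideanSpace.abs_apply_le_one_add_norm x)⟩

theorem exists_mul_norm_evalFDeriv_le (P : MvPolynomial ι ℝ) :
    ∃ A, ∀ x : EuclideanSpace ℝ ι,
      (1 + ‖x‖) * ‖evalFDeriv P x‖ ≤ A * (1 + ‖x‖) ^ P.totalDegree := by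
  refine ⟨∑ i, ∑ s ∈ (pderiv i P).support, |coeff s (pderiv i P)|, fun x => ?_⟩
  calc (1 + ‖x‖) * ‖evalFDeriv P x‖ ≤ (1 + ‖x‖) * ∑ i, |eval x.ofLp (pderiv i P)| := by
        gcongr
        exact norm_evalFDeriv_le P x
    _ = ∑ i, (1 + ‖x‖) * |eval x.ofLp (pderiv i P)| := mul_sum _ _ _
    _ ≤ _ := by
        rw [sum_mul]
        exact sum_le_sum fun i _ => P.mul_abs_eval_pderiv_le_of_abs_le i
          (le_add_of_nonneg_right (norm_nonneg x)) (EuclideanSpace.abs_apply_le_one_add_norm x)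

end Euclidean

end MvPolynomial

section Radial

variable {E : Type*} [NormedAddCommGroup E] [InnerProductSpace ℝ E]

theorem hasFDerivAt_div_sqrt_comp_norm_sq {p : E → ℝ} {p' : StrongDual ℝ E} {Q : ℝ → ℝ}
    {Q' : ℝ} {x : E} (hp : HasFDerivAt p p' x) (hQ : HasDerivAt Q Q' (‖x‖ ^ 2))
    (hQx : 0 < Q (‖x‖ ^ 2)) :
    HasFDerivAt (fun y => p y / √(Q (‖y‖ ^ 2)))
      ((√(Q (‖x‖ ^ 2)))⁻¹ • p' - (p x * Q' / √(Q (‖x‖ ^ 2)) ^ 3) • innerSL ℝ x) x := by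
  have hq : 0 < √(Q (‖x‖ ^ 2)) := Real.sqrt_pos.2 hQx
  have hsqrt := (hQ.comp_hasFDerivAt x (hasStrictFDerivAt_norm_sq x).hasFDerivAt).sqrt hQx.ne'
  have hf := hp.fun_mul ((hasDerivAt_inv hq.ne').comp_hasFDerivAt x hsqrt)
  simp only [Function.comp_def, ← div_eq_mul_inv] at hf
  refine hf.congr_fderiv (ContinuousLinearMap.ext fun v => ?_)
  simp only [add_apply, sub_apply, smul_apply, innerSL_apply_apply, smul_eq_mul, nsmul_eq_mul]
  field_simp
  ring

theorem norm_fderiv_div_sqrt_comp_norm_sq_le {p : E → ℝ} {p' : StrongDual ℝ E} {Q : ℝ → ℝ}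
    {Q' : ℝ} {x : E} (hp : HasFDerivAt p p' x) (hQ : HasDerivAt Q Q' (‖x‖ ^ 2))
    (hQx : 0 < Q (‖x‖ ^ 2)) :
    ‖fderiv ℝ (fun y => p y / √(Q (‖y‖ ^ 2))) x‖ ≤
      (‖p'‖ + |p x| * |Q'| * ‖x‖ / Q (‖x‖ ^ 2)) / √(Q (‖x‖ ^ 2)) := by
  have hq : 0 < √(Q (‖x‖ ^ 2)) := Real.sqrt_pos.2 hQx
  rw [(hasFDerivAt_div_sqrt_comp_norm_sq hp hQ hQx).fderiv]
  refine (norm_sub_le _ _).trans (le_of_eq ?_)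
  rw [norm_smul, norm_smul, innerSL_apply_norm, Real.norm_eq_abs, Real.norm_eq_abs, abs_inv,
    abs_div, abs_mul, abs_pow, abs_of_pos hq]
  field_simp
  rw [Real.sq_sqrt hQx.le]
  ring

theorem one_add_norm_mul_norm_fderiv_div_sqrt_le {p : E → ℝ} {p' : StrongDual ℝ E}
    {Q : ℝ → ℝ} {Q' K : ℝ} {x : E} (hp : HasFDerivAt p p' x) (hQ : HasDerivAt Q Q' (‖x‖ ^ 2))
    (hQx : 0 < Q (‖x‖ ^ 2)) (hK : (1 + ‖x‖ ^ 2) * |Q'| ≤ K * Q (‖x‖ ^ 2)) :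
    (1 + ‖x‖) * ‖fderiv ℝ (fun y => p y / √(Q (‖y‖ ^ 2))) x‖ ≤
      ((1 + ‖x‖) * ‖p'‖ + 2 * K * |p x|) / √(Q (‖x‖ ^ 2)) := by
  have hweight : (1 + ‖x‖) * ‖x‖ ≤ 2 * (1 + ‖x‖ ^ 2) := by nlinarith [sq_nonneg (1 - ‖x‖)]
  calc (1 + ‖x‖) * ‖fderiv ℝ (fun y => p y / √(Q (‖y‖ ^ 2))) x‖
      ≤ (1 + ‖x‖) * ((‖p'‖ + |p x| * |Q'| * ‖x‖ / Q (‖x‖ ^ 2)) / √(Q (‖x‖ ^ 2))) := by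
        gcongr
        exact norm_fderiv_div_sqrt_comp_norm_sq_le hp hQ hQx
    _ = ((1 + ‖x‖) * ‖p'‖ + |p x| * ((1 + ‖x‖) * ‖x‖ * |Q'|) / Q (‖x‖ ^ 2)) /
          √(Q (‖x‖ ^ 2)) := by ring
    _ ≤ ((1 + ‖x‖) * ‖p'‖ + |p x| * (2 * (K * Q (‖x‖ ^ 2))) / Q (‖x‖ ^ 2)) /
          √(Q (‖x‖ ^ 2)) := by
        gcongr (_ + |p x| * ?_ / _) / _
        calc (1 + ‖x‖) * ‖x‖ * |Q'| ≤ 2 * (1 + ‖x‖ ^ 2) * |Q'| := by gcongr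
          _ ≤ 2 * (K * Q (‖x‖ ^ 2)) := by rw [mul_assoc]; gcongr
    _ = _ := by field_simp

end Radial

theorem mul_one_add_pow_le_sqrt {d : ℕ} {ε r y : ℝ} (hε : 0 < ε) (hr : 0 ≤ r)
    (h : ε * (1 + r ^ 2) ^ d ≤ y) : √(ε / 2 ^ d) * (1 + r) ^ d ≤ √y := by
  rw [Real.le_sqrt (by positivity) ((by positivity : (0 : ℝ) ≤ _).trans h)]
  calc (√(ε / 2 ^ d) * (1 + r) ^ d) ^ 2 = ε * ((1 + r) ^ 2 / 2) ^ d := by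
        rw [mul_pow, Real.sq_sqrt (by positivity), ← pow_mul, mul_comm d, pow_mul, div_pow]
        ring
    _ ≤ ε * (1 + r ^ 2) ^ d := by gcongr; nlinarith [sq_nonneg (1 - r)]
    _ ≤ y := h

/-- For a polynomial P on ℝ^m of degree d and Q(u) = Σ c_k u^k with c_k ≥ 0,
c_d > 0 and Q > 0 on [0,∞), the quantity
H(P,Q) = sup_t (1+‖t‖)·‖∇(P/√(Q(‖t‖²)))(t)‖ is finite. -/
theorem stmt_17 (m d : ℕ) (P : MvPolynomial (Fin m) ℝ) (hP : P.totalDegree = d)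
    (c : ℕ → ℝ) (hc : ∀ k ≤ d, 0 ≤ c k) (hcd : 0 < c d)
    (Q : ℝ → ℝ) (hQ : Q = fun u : ℝ => ∑ k ∈ Finset.range (d + 1), c k * u ^ k)
    (hQpos : ∀ u : ℝ, 0 ≤ u → 0 < Q u) :
    ∃ C : ℝ, ∀ t : EuclideanSpace ℝ (Fin m),
      (1 + ‖t‖) *
          ‖gradient
            (fun s : EuclideanSpace ℝ (Fin m) =>
              MvPolynomial.eval (fun i => s i) P / Real.sqrt (Q (‖s‖ ^ 2))) t‖
        ≤ C := by
  subst hQ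
  beta_reduce at hQpos
  obtain ⟨A, hA⟩ := MvPolynomial.exists_abs_eval_le P
  obtain ⟨A', hA'⟩ := MvPolynomial.exists_mul_norm_evalFDeriv_le P
  rw [hP] at hA hA'
  obtain ⟨ε, hε, hQlow⟩ := exists_pos_mul_one_add_pow_le_sum hc hcd hQpos
  obtain ⟨K, hK, hlog⟩ := exists_one_add_mul_abs_sum_deriv_le hc hε hQlow
  refine ⟨(A' + 2 * K * A) / √(ε / 2 ^ d), fun t => ?_⟩
  have hnum : (1 + ‖t‖) * ‖P.evalFDeriv t‖ + 2 * K * |MvPolynomial.eval t.ofLp P| ≤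
      A' * (1 + ‖t‖) ^ d + 2 * K * (A * (1 + ‖t‖) ^ d) :=
    add_le_add (hA' t) (by gcongr; exact hA t)
  rw [gradient, LinearIsometryEquiv.norm_map]
  calc _ ≤ _ := one_add_norm_mul_norm_fderiv_div_sqrt_le (MvPolynomial.hasFDerivAt_eval P t)
        (hasDerivAt_sum_mul_pow _ c _) (hQpos _ (sq_nonneg _)) (hlog _ (sq_nonneg _))
    _ ≤ (A' * (1 + ‖t‖) ^ d + 2 * K * (A * (1 + ‖t‖) ^ d)) / (√(ε / 2 ^ d) * (1 + ‖t‖) ^ d) :=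
        div_le_div₀ ((by positivity : (0 : ℝ) ≤ _).trans hnum) hnum (by positivity)
          (mul_one_add_pow_le_sqrt hε (norm_nonneg t) (hQlow _ (sq_nonneg _)))
    _ = _ := by field_simp
end
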